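/- arXiv:1401.4425 — 5 statements merged into one kernel-verified Lean document; each statement's English description precedes it below -/
import Mathlib

section
/- Fix y ∈ R^n, an n×p real matrix X, positive weights w_1,…,w_p with W = diag(w_1,…,w_p), and λ > 0. If b¹ and b² are both minimizers over b ∈ R^p of the weighted Lasso loss ℓ(b) = (1/2)‖y − Xb‖₂² + nλ Σ_{j=1}^p w_j|b_j|, then Xb¹ = Xb², and consequently the subgradient vectors S^i = (nλ)^{-1} W^{-1} Xᵀ(y − Xb^i) (i = 1,2) determined by the KKT condition coincide: S¹ = S². -/
open Matrix

/-- The weighted Lasso loss `ℓ(b) = (1/2)‖y − Xb‖₂² + nλ Σ_j w_j |b_j|`. -/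
noncomputable def lassoLoss {n p : ℕ} (X : Matrix (Fin n) (Fin p) ℝ) (y : Fin n → ℝ)
    (w : Fin p → ℝ) (lam : ℝ) (b : Fin p → ℝ) : ℝ :=
  (1 / 2) * ∑ i, (y i - X.mulVec b i) ^ 2 + n * lam * ∑ j, w j * |b j|

/-! Midpoint convexity of the loss with a quadratic gain `‖X(b₁ − b₂)‖² / 8`: the squared-error
term is strictly convex in the fitted values `Xb` and the penalty is convex. Evaluating the
loss at the midpoint of two minimizers therefore forces `Xb₁ = Xb₂`; the subgradient
`S = (nλ)⁻¹ W⁻¹ Xᵀ(y − Xb)` is a function of `Xb` alone. -/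

section Midpoint

variable {ι : Type*} [Fintype ι]

theorem sum_sq_sub_midpoint (c u v : ι → ℝ) :
    ∑ i, (c i - 2⁻¹ * (u i + v i)) ^ 2 =
      (∑ i, (c i - u i) ^ 2 + ∑ i, (c i - v i) ^ 2) / 2 - (u - v) ⬝ᵥ (u - v) / 4 := by
  simp only [dotProduct, Pi.sub_apply, Finset.sum_div, ← Finset.sum_add_distrib,
    ← Finset.sum_sub_distrib]
  exact Finset.sum_congr rfl fun i _ => by ring

theorem sum_mul_abs_midpoint_le {w : ι → ℝ} (hw : 0 ≤ w) (u v : ι → ℝ) :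
    ∑ j, w j * |2⁻¹ * (u j + v j)| ≤ (∑ j, w j * |u j| + ∑ j, w j * |v j|) / 2 := by
  rw [← Finset.sum_add_distrib, Finset.sum_div]
  refine Finset.sum_le_sum fun j _ => ?_
  have habs : |2⁻¹ * (u j + v j)| ≤ (|u j| + |v j|) / 2 := by
    rw [abs_mul, abs_of_pos (by norm_num : (0 : ℝ) < 2⁻¹)]
    linarith [abs_add_le (u j) (v j)]
  calc w j * |2⁻¹ * (u j + v j)| ≤ w j * ((|u j| + |v j|) / 2) := by gcongr; exact hw j
    _ = (w j * |u j| + w j * |v j|) / 2 := by ring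

end Midpoint

section Lasso

variable {n p : ℕ} (X : Matrix (Fin n) (Fin p) ℝ) (y : Fin n → ℝ) {w : Fin p → ℝ} {lam : ℝ}

theorem lassoLoss_midpoint_le (hw : 0 ≤ w) (hlam : 0 ≤ lam) (b₁ b₂ : Fin p → ℝ) :
    lassoLoss X y w lam ((2 : ℝ)⁻¹ • (b₁ + b₂)) ≤
      (lassoLoss X y w lam b₁ + lassoLoss X y w lam b₂) / 2 -
        (X *ᵥ b₁ - X *ᵥ b₂) ⬝ᵥ (X *ᵥ b₁ - X *ᵥ b₂) / 8 := by
  have hquad := sum_sq_sub_midpoint y (X *ᵥ b₁) (X *ᵥ b₂)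
  have hpen := mul_le_mul_of_nonneg_left (sum_mul_abs_midpoint_le hw b₁ b₂)
    (by positivity : (0 : ℝ) ≤ n * lam)
  simp only [lassoLoss, mulVec_smul, mulVec_add, Pi.smul_apply, Pi.add_apply, smul_eq_mul]
  linarith

theorem mulVec_eq_of_isMin_lassoLoss (hw : 0 ≤ w) (hlam : 0 ≤ lam) {b₁ b₂ : Fin p → ℝ}
    (h₁ : ∀ b, lassoLoss X y w lam b₁ ≤ lassoLoss X y w lam b)
    (h₂ : ∀ b, lassoLoss X y w lam b₂ ≤ lassoLoss X y w lam b) :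
    X *ᵥ b₁ = X *ᵥ b₂ := by
  set d := X *ᵥ b₁ - X *ᵥ b₂
  have hmid := lassoLoss_midpoint_le X y hw hlam b₁ b₂
  have hd_nonpos : d ⬝ᵥ d ≤ 0 := by
    linarith [h₁ ((2 : ℝ)⁻¹ • (b₁ + b₂)), h₁ b₂, h₂ b₁]
  have hd_nonneg : 0 ≤ d ⬝ᵥ d := Finset.sum_nonneg fun i _ => mul_self_nonneg (d i)
  exact sub_eq_zero.mp (dotProduct_self_eq_zero.mp (le_antisymm hd_nonpos hd_nonneg))

end Lasso

/-- Any two minimizers of the weighted Lasso loss have the same fitted values `Xb`, and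
consequently the same KKT subgradient `S = (nλ)⁻¹ W⁻¹ Xᵀ (y − Xb)`. -/
theorem lasso_fitted_and_subgradient_unique {n p : ℕ}
    (X : Matrix (Fin n) (Fin p) ℝ) (y : Fin n → ℝ)
    (w : Fin p → ℝ) (hw : ∀ j, 0 < w j) (lam : ℝ) (hlam : 0 < lam)
    (b₁ b₂ : Fin p → ℝ)
    (h₁ : ∀ b, lassoLoss X y w lam b₁ ≤ lassoLoss X y w lam b)
    (h₂ : ∀ b, lassoLoss X y w lam b₂ ≤ lassoLoss X y w lam b) :
    X.mulVec b₁ = X.mulVec b₂ ∧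
      (fun j => ((n : ℝ) * lam)⁻¹ * (w j)⁻¹ * Xᵀ.mulVec (y - X.mulVec b₁) j) =
      (fun j => ((n : ℝ) * lam)⁻¹ * (w j)⁻¹ * Xᵀ.mulVec (y - X.mulVec b₂) j) := by
  have hfit := mulVec_eq_of_isMin_lassoLoss X y (fun j => (hw j).le) hlam.le h₁ h₂
  exact ⟨hfit, by rw [hfit]⟩
end

section
/- Let X be an n×p real matrix with rank(X) = p ≤ n, C = XᵀX/n, W = diag(w_1,…,w_p) with all w_j > 0, λ > 0, and β ∈ R^p. Then the map H(b, s) = Cb + λWs − Cβ is a bijection from the set {(b, s) ∈ R^p × R^p : s is a subgradient of the ℓ₁ norm at b} onto R^p; that is, for every u ∈ R^p there exists a unique pair (b, s) with s a subgradient of the ℓ₁ norm at b such that Cb + λWs − Cβ = u. -/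
/-!
The rank condition makes `C` positive definite. Injectivity: the subdifferential of `|·|` is
monotone, so for two solutions `d = b - b'` satisfies
`dᵀ C d = -∑ λ wⱼ (sⱼ - s'ⱼ) (bⱼ - b'ⱼ) ≤ 0`, forcing `d = 0`. Surjectivity: for
`v = u + Cβ` the coercive function `½ bᵀCb - v ⬝ b + λ ∑ wⱼ |bⱼ|` has a minimizer `m`;
minimality along each coordinate axis, with the quadratic term scaled away by convexity of `|·|`,
shows that `sⱼ = (v - Cm)ⱼ / (λ wⱼ)` is an ℓ₁ subgradient at `m`.
-/

open Matrix

/-- `s` is a subgradient of the ℓ₁ norm at `b`. -/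
def IsL1Subgradient {p : ℕ} (s b : Fin p → ℝ) : Prop :=
  ∀ j, (b j ≠ 0 → s j = Real.sign (b j)) ∧ (b j = 0 → |s j| ≤ 1)

open Filter Topology

lemma abs_add_mul_sub_abs_le (x t : ℝ) {ε : ℝ} (h0 : 0 ≤ ε) (h1 : ε ≤ 1) :
    |x + ε * t| - |x| ≤ ε * (|x + t| - |x|) := by
  have hsplit : x + ε * t = (1 - ε) * x + ε * (x + t) := by ring
  have := abs_add_le ((1 - ε) * x) (ε * (x + t))
  rw [abs_mul, abs_mul, abs_of_nonneg (sub_nonneg.2 h1), abs_of_nonneg h0] at this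
  rw [hsplit]
  linarith

lemma abs_add_mul_le_of_forall_sub_sq_le {x s q : ℝ}
    (h : ∀ t, s * t - q * t ^ 2 ≤ |x + t| - |x|) (t : ℝ) : |x| + s * t ≤ |x + t| := by
  have hscaled : ∀ ε : ℝ, 0 < ε → ε ≤ 1 → s * t - ε * (q * t ^ 2) ≤ |x + t| - |x| := by
    intro ε hε0 hε1
    have h1 := h (ε * t)
    have h2 := abs_add_mul_sub_abs_le x t hε0.le hε1
    have h3 : ε * (s * t - ε * (q * t ^ 2)) ≤ ε * (|x + t| - |x|) := by nlinarith
    exact le_of_mul_le_mul_left h3 hε0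
  have hlim : Tendsto (fun ε : ℝ => s * t - ε * (q * t ^ 2)) (𝓝[>] 0) (𝓝 (s * t)) := by
    have : Continuous fun ε : ℝ => s * t - ε * (q * t ^ 2) := by fun_prop
    simpa using this.continuousWithinAt.tendsto (x := 0) (s := Set.Ioi 0)
  have hev : ∀ᶠ ε in 𝓝[>] (0 : ℝ), s * t - ε * (q * t ^ 2) ≤ |x + t| - |x| := by
    filter_upwards [Ioo_mem_nhdsGT one_pos] with ε hε using hscaled ε hε.1 hε.2.le
  linarith [le_of_tendsto hlim hev]

lemma abs_subgradient_iff {x s : ℝ} :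
    ((x ≠ 0 → s = Real.sign x) ∧ (x = 0 → |s| ≤ 1)) ↔ ∀ t, |x| + s * t ≤ |x + t| := by
  constructor
  · rintro ⟨hne, hzero⟩ t
    rcases lt_trichotomy x 0 with hx | rfl | hx
    · rw [hne hx.ne, Real.sign_of_neg hx, abs_of_neg hx]
      linarith [neg_abs_le (x + t)]
    · rw [abs_zero, zero_add, zero_add]
      calc s * t ≤ |s| * |t| := by rw [← abs_mul]; exact le_abs_self _
        _ ≤ 1 * |t| := by gcongr; exact hzero rfl
        _ = |t| := one_mul _
    · rw [hne hx.ne', Real.sign_of_pos hx, abs_of_pos hx]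
      linarith [le_abs_self (x + t)]
  · intro h
    have hs : |s| ≤ 1 := abs_le.2
      ⟨by linarith [h (-1), abs_add_le x (-1), abs_neg (1 : ℝ), abs_one (α := ℝ)],
        by linarith [h 1, abs_add_le x 1, abs_one (α := ℝ)]⟩
    have hsx : s * x = |x| := by
      have := h (-x)
      have := h x
      rw [add_neg_cancel, abs_zero] at *
      linarith [abs_add_le x x]
    refine ⟨fun hx => ?_, fun _ => hs⟩
    rcases hx.lt_or_gt with hx | hx
    · rw [Real.sign_of_neg hx]
      rw [abs_of_neg hx] at hsx
      nlinarith
    · rw [Real.sign_of_pos hx]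
      rw [abs_of_pos hx] at hsx
      nlinarith

namespace Matrix

variable {ι : Type*} [Fintype ι] {C : Matrix ι ι ℝ}

lemma smul_dotProduct_mulVec_smul (C : Matrix ι ι ℝ) (r : ℝ) (x : ι → ℝ) :
    (r • x) ⬝ᵥ C *ᵥ (r • x) = r ^ 2 * (x ⬝ᵥ C *ᵥ x) := by
  rw [mulVec_smul, dotProduct_smul, smul_dotProduct, smul_eq_mul, smul_eq_mul]
  ring

lemma IsHermitian.add_dotProduct_mulVec_add (hC : C.IsHermitian) (x y : ι → ℝ) :
    (x + y) ⬝ᵥ C *ᵥ (x + y) = x ⬝ᵥ C *ᵥ x + 2 * (y ⬝ᵥ C *ᵥ x) + y ⬝ᵥ C *ᵥ y := by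
  have hsymm : x ⬝ᵥ C *ᵥ y = y ⬝ᵥ C *ᵥ x := by
    rw [dotProduct_mulVec, ← mulVec_transpose, dotProduct_comm,
      ← conjTranspose_eq_transpose_of_trivial, hC.eq]
  rw [mulVec_add, dotProduct_add, add_dotProduct, add_dotProduct, hsymm]
  ring

lemma PosDef.dotProduct_mulVec_pos_of_ne_zero (hC : C.PosDef) {x : ι → ℝ} (hx : x ≠ 0) :
    0 < x ⬝ᵥ C *ᵥ x := by
  simpa using hC.dotProduct_mulVec_pos hx

lemma PosDef.exists_pos_mul_sq_norm_le (hC : C.PosDef) :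
    ∃ μ > 0, ∀ x : ι → ℝ, μ * ‖x‖ ^ 2 ≤ x ⬝ᵥ C *ᵥ x := by
  have hcont : Continuous fun x : ι → ℝ => x ⬝ᵥ C *ᵥ x := by fun_prop
  have hunit : ∀ x : ι → ℝ, x ≠ 0 → ‖x‖⁻¹ • x ∈ Metric.sphere (0 : ι → ℝ) 1 := fun x hx => by
    simp [norm_smul, hx]
  rcases (Metric.sphere (0 : ι → ℝ) 1).eq_empty_or_nonempty with hS | hS
  · refine ⟨1, one_pos, fun x => ?_⟩
    obtain rfl : x = 0 := by
      by_contra hx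
      simpa [hS] using hunit x hx
    simp
  obtain ⟨x₀, hx₀, hmin⟩ := (isCompact_sphere (0 : ι → ℝ) 1).exists_isMinOn hS hcont.continuousOn
  have hx₀ne : x₀ ≠ 0 := by rintro rfl; simp at hx₀
  refine ⟨_, hC.dotProduct_mulVec_pos_of_ne_zero hx₀ne, fun x => ?_⟩
  rcases eq_or_ne x 0 with rfl | hx
  · simp
  have hle : x₀ ⬝ᵥ C *ᵥ x₀ ≤ (‖x‖⁻¹ • x) ⬝ᵥ C *ᵥ (‖x‖⁻¹ • x) := hmin (hunit x hx)
  rw [smul_dotProduct_mulVec_smul, inv_pow] at hle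
  have hpos : 0 < ‖x‖ ^ 2 := by positivity
  calc _ ≤ (‖x‖ ^ 2)⁻¹ * (x ⬝ᵥ C *ᵥ x) * ‖x‖ ^ 2 := by gcongr
    _ = x ⬝ᵥ C *ᵥ x := by field_simp

lemma mulVec_injective_of_rank_eq {m p : ℕ} {X : Matrix (Fin m) (Fin p) ℝ}
    (hX : X.rank = p) : Function.Injective X.mulVec :=
  mulVec_injective_iff.2 <| linearIndependent_iff_card_eq_finrank_span.2 <| by
    rw [Fintype.card_fin, Set.finrank, ← rank_eq_finrank_span_cols, hX]

lemma posDef_inv_smul_transpose_mul_self {n : ℕ} {X : Matrix (Fin n) ι ℝ}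
    (hX : Function.Injective X.mulVec) : ((n : ℝ)⁻¹ • (Xᵀ * X)).PosDef := by
  rcases n.eq_zero_or_pos with rfl | hn
  · refine PosDef.of_dotProduct_mulVec_pos (by simp [IsHermitian]) fun x hx => absurd ?_ hx
    exact hX (Subsingleton.elim _ _)
  rw [← conjTranspose_eq_transpose_of_trivial]
  exact (PosDef.conjTranspose_mul_self X hX).smul (by positivity)

end Matrix

lemma dotProduct_le_sum_abs_mul_norm {ι : Type*} [Fintype ι] (v b : ι → ℝ) :
    v ⬝ᵥ b ≤ (∑ i, |v i|) * ‖b‖ := by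
  rw [Finset.sum_mul]
  refine Finset.sum_le_sum fun i _ => ?_
  calc v i * b i ≤ |v i| * |b i| := by rw [← abs_mul]; exact le_abs_self _
    _ ≤ |v i| * ‖b‖ := by gcongr; exact norm_le_pi_norm b i

section Objective

variable {ι : Type*} [Fintype ι] (C : Matrix ι ι ℝ) (c v : ι → ℝ)

/-- For `C = XᵀX/n`, `v = Xᵀy/n` and `c = λ w` this is the weighted Lasso loss divided by `n`,
up to an additive constant. -/
noncomputable def lassoObjective (b : ι → ℝ) : ℝ :=
  b ⬝ᵥ C *ᵥ b / 2 - v ⬝ᵥ b + ∑ j, c j * |b j|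

lemma continuous_lassoObjective : Continuous (lassoObjective C c v) := by
  unfold lassoObjective
  fun_prop

variable {C c}

lemma exists_forall_lassoObjective_le (hC : C.PosDef) (hc : ∀ j, 0 ≤ c j) :
    ∃ m, ∀ b, lassoObjective C c v m ≤ lassoObjective C c v b := by
  obtain ⟨μ, hμ, hquad⟩ := hC.exists_pos_mul_sq_norm_le
  set V := ∑ i, |v i|
  refine (continuous_lassoObjective C c v).exists_forall_le' 0 ?_
  filter_upwards [tendsto_norm_cocompact_atTop.eventually (eventually_ge_atTop (2 * V / μ))]
    with b hb
  have hpen : 0 ≤ ∑ j, c j * |b j| :=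
    Finset.sum_nonneg fun j _ => mul_nonneg (hc j) (abs_nonneg _)
  have hquad := hquad b
  have hlin := dotProduct_le_sum_abs_mul_norm v b
  rw [div_le_iff₀ hμ] at hb
  simp only [lassoObjective, mulVec_zero, dotProduct_zero, Pi.zero_apply, abs_zero, mul_zero,
    Finset.sum_const_zero]
  nlinarith [norm_nonneg b]

lemma lassoObjective_add_single [DecidableEq ι] (hC : C.IsHermitian) (b : ι → ℝ) (j : ι)
    (t : ℝ) :
    lassoObjective C c v (b + Pi.single j t) = lassoObjective C c v b
      + t * (C *ᵥ b - v) j + C j j / 2 * t ^ 2 + c j * (|b j + t| - |b j|) := by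
  have hpen : ∑ k, c k * |(b + Pi.single j t : ι → ℝ) k|
      = ∑ k, c k * |b k| + c j * (|b j + t| - |b j|) := by
    rw [← sub_eq_iff_eq_add', ← Finset.sum_sub_distrib, Finset.sum_eq_single j]
    · simp [mul_sub]
    · intro k _ hk
      simp [hk]
    · simp
  simp only [lassoObjective, hC.add_dotProduct_mulVec_add, hpen, dotProduct_add,
    single_dotProduct, dotProduct_single, mulVec_single, Pi.sub_apply, Pi.smul_apply, col_apply,
    op_smul_eq_mul]
  ring

end Objective

section Subgradient

variable {p : ℕ} {C : Matrix (Fin p) (Fin p) ℝ} {c s b : Fin p → ℝ}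

lemma isL1Subgradient_iff : IsL1Subgradient s b ↔ ∀ j t, |b j| + s j * t ≤ |b j + t| :=
  forall_congr' fun _ => abs_subgradient_iff

lemma IsL1Subgradient.sub_mul_sub_nonneg {s' b' : Fin p → ℝ} (h : IsL1Subgradient s b)
    (h' : IsL1Subgradient s' b') (j : Fin p) : 0 ≤ (s j - s' j) * (b j - b' j) := by
  have h₁ := isL1Subgradient_iff.1 h j (b' j - b j)
  have h₂ := isL1Subgradient_iff.1 h' j (b j - b' j)
  rw [add_sub_cancel] at h₁ h₂
  linarith

lemma IsL1Subgradient.eq_of_mulVec_add_eq {s' b' : Fin p → ℝ} (hC : C.PosDef)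
    (hc : ∀ j, 0 < c j) (h : IsL1Subgradient s b) (h' : IsL1Subgradient s' b')
    (heq : C *ᵥ b + (fun j => c j * s j) = C *ᵥ b' + (fun j => c j * s' j)) :
    b = b' ∧ s = s' := by
  have hCd : C *ᵥ (b - b') = fun j => c j * (s' j - s j) := by
    rw [mulVec_sub, sub_eq_iff_eq_add]
    funext j
    have := congrFun heq j
    simp only [Pi.add_apply] at this ⊢
    linarith
  have hb : b = b' := by
    by_contra hne
    have hpos := hC.dotProduct_mulVec_pos_of_ne_zero (sub_ne_zero.2 hne)
    have hnonpos : (b - b') ⬝ᵥ C *ᵥ (b - b') ≤ 0 := by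
      rw [hCd]
      refine Finset.sum_nonpos fun j _ => ?_
      have := mul_nonneg (hc j).le (h.sub_mul_sub_nonneg h' j)
      simp only [Pi.sub_apply]
      nlinarith
    exact hnonpos.not_gt hpos
  subst hb
  refine ⟨rfl, funext fun j => mul_left_cancel₀ (hc j).ne' ?_⟩
  simpa using congrFun heq j

lemma isL1Subgradient_of_forall_lassoObjective_le {v m : Fin p → ℝ} (hC : C.IsHermitian)
    (hc : ∀ j, 0 < c j) (hm : ∀ b, lassoObjective C c v m ≤ lassoObjective C c v b) :
    IsL1Subgradient (fun j => (v - C *ᵥ m) j / c j) m := by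
  refine isL1Subgradient_iff.2 fun j =>
    abs_add_mul_le_of_forall_sub_sq_le (q := C j j / (2 * c j)) fun t => ?_
  have hmin := hm (m + Pi.single j t)
  rw [lassoObjective_add_single v hC] at hmin
  have hcj := hc j
  rw [← mul_le_mul_iff_of_pos_left hcj]
  field_simp
  simp only [Pi.sub_apply] at hmin ⊢
  nlinarith

theorem existsUnique_isL1Subgradient_mulVec_add_eq (hC : C.PosDef) (hc : ∀ j, 0 < c j)
    (v : Fin p → ℝ) :
    ∃! bs : (Fin p → ℝ) × (Fin p → ℝ),
      IsL1Subgradient bs.2 bs.1 ∧ C *ᵥ bs.1 + (fun j => c j * bs.2 j) = v := by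
  obtain ⟨m, hm⟩ := exists_forall_lassoObjective_le v hC fun j => (hc j).le
  set s₀ : Fin p → ℝ := fun j => (v - C *ᵥ m) j / c j
  have hs₀ : IsL1Subgradient s₀ m :=
    isL1Subgradient_of_forall_lassoObjective_le hC.isHermitian hc hm
  have hsolves : C *ᵥ m + (fun j => c j * s₀ j) = v := by
    funext j
    simp [s₀, mul_div_cancel₀ _ (hc j).ne']
  refine ⟨(m, s₀), ⟨hs₀, hsolves⟩, ?_⟩
  rintro ⟨b, s⟩ ⟨hs, heq⟩
  obtain ⟨hb, hs⟩ := hs.eq_of_mulVec_add_eq hC hc hs₀ (heq.trans hsolves.symm)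
  exact Prod.ext hb hs

end Subgradient

theorem lasso_KKT_bijection_low_dim_general {n p : ℕ}
    (X : Matrix (Fin n) (Fin p) ℝ) (hrank : X.rank = p)
    (w : Fin p → ℝ) (hw : ∀ j, 0 < w j) (lam : ℝ) (hlam : 0 < lam)
    (β : Fin p → ℝ) :
    ∀ u : Fin p → ℝ, ∃! bs : (Fin p → ℝ) × (Fin p → ℝ),
      IsL1Subgradient bs.2 bs.1 ∧
      (((n : ℝ)⁻¹ • (Xᵀ * X)).mulVec bs.1 + (fun j => lam * w j * bs.2 j)
        - ((n : ℝ)⁻¹ • (Xᵀ * X)).mulVec β) = u := by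
  intro u
  have hC := posDef_inv_smul_transpose_mul_self (mulVec_injective_of_rank_eq hrank)
  simpa only [sub_eq_iff_eq_add] using
    existsUnique_isL1Subgradient_mulVec_add_eq hC (c := fun j => lam * w j)
      (fun j => mul_pos hlam (hw j)) (u + ((n : ℝ)⁻¹ • (Xᵀ * X)) *ᵥ β)

/-- In the low-dimensional setting (`rank X = p ≤ n`), the map
`H(b, s) = Cb + λWs − Cβ` is a bijection from
`{(b, s) : s is an ℓ₁ subgradient at b}` onto `ℝ^p`. -/
theorem lasso_KKT_bijection_low_dim {n p : ℕ} (hpn : p ≤ n)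
    (X : Matrix (Fin n) (Fin p) ℝ) (hrank : X.rank = p)
    (w : Fin p → ℝ) (hw : ∀ j, 0 < w j) (lam : ℝ) (hlam : 0 < lam)
    (β : Fin p → ℝ) :
    ∀ u : Fin p → ℝ, ∃! bs : (Fin p → ℝ) × (Fin p → ℝ),
      IsL1Subgradient bs.2 bs.1 ∧
      (((n : ℝ)⁻¹ • (Xᵀ * X)).mulVec bs.1 + (fun j => lam * w j * bs.2 j)
        - ((n : ℝ)⁻¹ • (Xᵀ * X)).mulVec β) = u :=
  lasso_KKT_bijection_low_dim_general X hrank w hw lam hlam β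
end

section
/- Consider the linear model y = Xβ₀ + ε with X a fixed n×p real matrix of rank p ≤ n, so that for every y the minimizer β̂(y) of the weighted Lasso loss ℓ is unique; let S(y) be its subgradient and 𝒜(y) = supp(β̂(y)). Assume U = Xᵀε/n has a probability density f_U with respect to Lebesgue measure on R^p. Then for every A ⊆ {1,…,p} with complement I and every Borel set B ⊆ R^{|A|} × R^{|I|}: P((β̂_A, S_I) ∈ B and 𝒜 = A) = ∫_{B ∩ Ω_A} f_U(H(b_A, s_I, A; β₀)) |det D(A)| d(b_A, s_I), where the integral is with respect to p-dimensional Lebesgue measure, Ω_A = {(b_A, s_I) : b_j ≠ 0 for all j ∈ A, s_I ∈ [−1,1]^{|I|}}, H(b_A, s_I, A; β) = C_A b_A + λ W_A sgn(b_A) + λ W_I s_I − Cβ, and D(A) = (C_A | λ W_I). -/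
open Matrix MeasureTheory

/-- The matrix `D(A) = (C_A | λ W_I)`. -/
def Dmat {p : ℕ} (C : Matrix (Fin p) (Fin p) ℝ) (w : Fin p → ℝ) (lam : ℝ)
    (A : Finset (Fin p)) : Matrix (Fin p) (Fin p) ℝ :=
  fun i j => if j ∈ A then C i j else if i = j then lam * w j else 0

/-- The map `H(b_A, s_I, A; β) = C_A b_A + λ W_A sgn(b_A) + λ W_I s_I − Cβ`, acting on the
combined coordinate vector `z` (with `z_j = b_j` for `j ∈ A` and `z_j = s_j` for `j ∉ A`). -/
noncomputable def Hmap {p : ℕ} (C : Matrix (Fin p) (Fin p) ℝ) (w : Fin p → ℝ) (lam : ℝ)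
    (A : Finset (Fin p)) (β : Fin p → ℝ) (z : Fin p → ℝ) : Fin p → ℝ :=
  C.mulVec (fun j => if j ∈ A then z j else 0)
    + (fun j => lam * w j * (if j ∈ A then Real.sign (z j) else z j))
    - C.mulVec β

/-!
By the KKT condition, `U = Xᵀε/n` equals `H(β̂_A, S_I, 𝒜; β₀)`. Since `C = XᵀX/n` is positive
definite, monotonicity of the subdifferential of `‖·‖₁` shows that the KKT equation
`Cb + λWs = u` has at most one solution with `s ∈ ∂‖b‖₁`. Hence `H` is injective on `Ω_A` and the
event `{(β̂_A, S_I) ∈ B, 𝒜 = A}` is exactly `{U ∈ H(B ∩ Ω_A)}`. On `Ω_A` the signs of `b_A` are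
locally constant, so `H` is locally affine with linear part `D(A)`, and the formula is the change
of variables `u = H(z)` in the density of `U`.
-/

namespace Real

theorem sign_mul_self_eq_abs (x : ℝ) : sign x * x = |x| := by
  rcases lt_trichotomy x 0 with h | rfl | h
  · rw [sign_of_neg h, abs_of_neg h]; ring
  · simp
  · rw [sign_of_pos h, abs_of_pos h]; ring

theorem abs_sign_le_one (x : ℝ) : |sign x| ≤ 1 := by
  rcases sign_apply_eq x with h | h | h <;> simp [h]

theorem eventually_sign_eq {x : ℝ} (hx : x ≠ 0) :
    ∀ᶠ y in nhds x, sign y = sign x := by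
  rcases hx.lt_or_gt with h | h
  · filter_upwards [eventually_lt_nhds h] with y hy
    rw [sign_of_neg hy, sign_of_neg h]
  · filter_upwards [eventually_gt_nhds h] with y hy
    rw [sign_of_pos hy, sign_of_pos h]

end Real

namespace IsL1Subgradient

variable {p : ℕ} {s b s' b' : Fin p → ℝ}

theorem mul_self_eq_abs (h : IsL1Subgradient s b) (j : Fin p) : s j * b j = |b j| := by
  by_cases hb : b j = 0
  · simp [hb]
  · rw [(h j).1 hb, Real.sign_mul_self_eq_abs]

theorem abs_le_one (h : IsL1Subgradient s b) (j : Fin p) : |s j| ≤ 1 := by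
  by_cases hb : b j = 0
  · exact (h j).2 hb
  · rw [(h j).1 hb]; exact Real.abs_sign_le_one _

theorem monotone (h : IsL1Subgradient s b) (h' : IsL1Subgradient s' b') (j : Fin p) :
    0 ≤ (s j - s' j) * (b j - b' j) := by
  have hle : ∀ {t x : ℝ}, |t| ≤ 1 → t * x ≤ |x| := fun {t x} ht =>
    (le_abs_self _).trans (by rw [abs_mul]; exact mul_le_of_le_one_left (abs_nonneg x) ht)
  nlinarith [h.mul_self_eq_abs j, h'.mul_self_eq_abs j,
    hle (x := b' j) (h.abs_le_one j), hle (x := b j) (h'.abs_le_one j)]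

/-- Pairing the difference of two KKT solutions with `b - b'` gives `(b - b')ᵀC(b - b') ≤ 0`. -/
theorem eq_of_kkt {C : Matrix (Fin p) (Fin p) ℝ} (hC : C.PosDef) {w : Fin p → ℝ}
    (hw : ∀ j, 0 < w j) {lam : ℝ} (hlam : 0 < lam)
    (h : IsL1Subgradient s b) (h' : IsL1Subgradient s' b')
    (hkkt : C *ᵥ b + (fun j => lam * w j * s j) = C *ᵥ b' + fun j => lam * w j * s' j) :
    b = b' ∧ s = s' := by
  have hb : b = b' := by
    by_contra hne
    have hpos := hC.dotProduct_mulVec_pos (sub_ne_zero.mpr hne)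
    have hCv : C *ᵥ (b - b') = fun j => lam * w j * (s' j - s j) := by
      funext j
      have := congrFun hkkt j
      simp only [mulVec_sub, Pi.sub_apply, Pi.add_apply] at this ⊢
      linarith
    rw [star_trivial, hCv] at hpos
    have hnonpos : (b - b') ⬝ᵥ (fun j => lam * w j * (s' j - s j)) ≤ 0 :=
      Finset.sum_nonpos fun j _ => by
        show (b j - b' j) * (lam * w j * (s' j - s j)) ≤ 0
        nlinarith [mul_nonneg (mul_pos hlam (hw j)).le (h.monotone h' j)]
    exact hnonpos.not_gt hpos
  subst hb
  refine ⟨rfl, funext fun j => mul_left_cancel₀ (mul_pos hlam (hw j)).ne' ?_⟩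
  simpa using congrFun hkkt j

end IsL1Subgradient

theorem Matrix.mulVec_injective_of_rank_eq_card {K m n : Type*} [Field K] [Fintype m]
    [Fintype n] {X : Matrix m n K} (hrank : X.rank = Fintype.card n) :
    Function.Injective X.mulVec := by
  have hdim := LinearMap.finrank_range_add_finrank_ker X.mulVecLin
  rw [← Matrix.rank, hrank, Module.finrank_fintype_fun_eq_card] at hdim
  have hker : Module.finrank K (LinearMap.ker X.mulVecLin) = 0 := by omega
  exact LinearMap.ker_eq_bot.mp (Submodule.finrank_eq_zero.mp hker)

theorem Matrix.posDef_inv_smul_transpose_mul_self_s3 {m p : ℕ} {X : Matrix (Fin m) (Fin p) ℝ}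
    (hX : Function.Injective X.mulVec) : ((m : ℝ)⁻¹ • (Xᵀ * X)).PosDef := by
  rcases Nat.eq_zero_or_pos m with rfl | hm
  · obtain rfl : p = 0 := by
      have := hX.subsingleton
      simpa using Module.finrank_zero_of_subsingleton (R := ℝ) (M := Fin p → ℝ)
    convert PosDef.conjTranspose_mul_self X hX using 1
    exact Subsingleton.elim _ _
  · exact (PosDef.conjTranspose_mul_self X hX).smul (by positivity)

theorem Matrix.inv_smul_transpose_mul_mulVec_add_sub {m p : ℕ} (X : Matrix (Fin m) (Fin p) ℝ)
    (β : Fin p → ℝ) (e : Fin m → ℝ) :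
    (fun j => (m : ℝ)⁻¹ * (Xᵀ *ᵥ (X *ᵥ β + e)) j) - ((m : ℝ)⁻¹ • (Xᵀ * X)) *ᵥ β =
      fun j => (m : ℝ)⁻¹ * (Xᵀ *ᵥ e) j := by
  funext j
  simp only [mulVec_add, mulVec_mulVec, smul_mulVec, Pi.sub_apply, Pi.add_apply, Pi.smul_apply,
    smul_eq_mul]
  ring

section Region

variable {p : ℕ} (A : Finset (Fin p))

/-- The vector `(b_A, s_I)` of the paper, stored in one vector of `ℝ^p`. -/
def augment (b s : Fin p → ℝ) : Fin p → ℝ := fun j => if j ∈ A then b j else s j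

def activePart (z : Fin p → ℝ) : Fin p → ℝ := fun j => if j ∈ A then z j else 0

noncomputable def subgradPart (z : Fin p → ℝ) : Fin p → ℝ :=
  fun j => if j ∈ A then Real.sign (z j) else z j

/-- The region `Ω_A` of the paper. -/
def lassoRegion : Set (Fin p → ℝ) := {z | (∀ j ∈ A, z j ≠ 0) ∧ ∀ j ∉ A, |z j| ≤ 1}

theorem measurableSet_lassoRegion : MeasurableSet (lassoRegion A) := by
  unfold lassoRegion
  measurability

variable {A}

theorem augment_activePart_subgradPart (z : Fin p → ℝ) :
    augment A (activePart A z) (subgradPart A z) = z := by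
  funext j
  by_cases hj : j ∈ A <;> simp [augment, activePart, subgradPart, hj]

theorem activePart_ne_zero_iff {z : Fin p → ℝ} (hz : z ∈ lassoRegion A) (j : Fin p) :
    activePart A z j ≠ 0 ↔ j ∈ A := by
  by_cases hj : j ∈ A <;> simp [activePart, hj, hz.1 j]

theorem isL1Subgradient_subgradPart {z : Fin p → ℝ} (hz : z ∈ lassoRegion A) :
    IsL1Subgradient (subgradPart A z) (activePart A z) := by
  intro j
  by_cases hj : j ∈ A <;> simp [activePart, subgradPart, hj, hz.1 j, hz.2 j]

theorem augment_mem_lassoRegion {b s : Fin p → ℝ} (hs : IsL1Subgradient s b)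
    (hA : ∀ j, b j ≠ 0 ↔ j ∈ A) : augment A b s ∈ lassoRegion A :=
  ⟨fun j hj => by simpa [augment, hj] using (hA j).2 hj,
    fun j hj => by simpa [augment, hj] using (hs j).2 (not_not.1 (mt (hA j).1 hj))⟩

theorem activePart_augment {b : Fin p → ℝ} (s : Fin p → ℝ) (hA : ∀ j, b j ≠ 0 ↔ j ∈ A) :
    activePart A (augment A b s) = b := by
  funext j
  by_cases hj : j ∈ A
  · simp [activePart, augment, hj]
  · simpa [activePart, augment, hj, eq_comm] using mt (hA j).1 hj

theorem subgradPart_augment {b s : Fin p → ℝ} (hs : IsL1Subgradient s b)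
    (hA : ∀ j, b j ≠ 0 ↔ j ∈ A) : subgradPart A (augment A b s) = s := by
  funext j
  by_cases hj : j ∈ A
  · simp [subgradPart, augment, hj, (hs j).1 ((hA j).2 hj)]
  · simp [subgradPart, augment, hj]

end Region

section Hmap

variable {p : ℕ} {C : Matrix (Fin p) (Fin p) ℝ} {w : Fin p → ℝ} {lam : ℝ}

theorem Hmap_eq (A : Finset (Fin p)) (β z : Fin p → ℝ) :
    Hmap C w lam A β z =
      C *ᵥ activePart A z + (fun j => lam * w j * subgradPart A z j) - C *ᵥ β :=
  rfl

theorem injOn_Hmap (hC : C.PosDef) (hw : ∀ j, 0 < w j) (hlam : 0 < lam)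
    (A : Finset (Fin p)) (β : Fin p → ℝ) : Set.InjOn (Hmap C w lam A β) (lassoRegion A) := by
  intro z hz z' hz' hzz'
  obtain ⟨hb, hs⟩ := (isL1Subgradient_subgradPart hz).eq_of_kkt hC hw hlam
    (isL1Subgradient_subgradPart hz') (by simpa only [Hmap_eq, sub_left_inj] using hzz')
  rw [← augment_activePart_subgradPart z, hb, hs, augment_activePart_subgradPart]

theorem augment_mem_and_support_iff (hC : C.PosDef) (hw : ∀ j, 0 < w j) (hlam : 0 < lam)
    (A : Finset (Fin p)) (β : Fin p → ℝ) {b s u : Fin p → ℝ} (hs : IsL1Subgradient s b)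
    (hkkt : u = C *ᵥ b + fun j => lam * w j * s j) (B : Set (Fin p → ℝ)) :
    (augment A b s ∈ B ∧ ∀ j, b j ≠ 0 ↔ j ∈ A) ↔
      u - C *ᵥ β ∈ Hmap C w lam A β '' (B ∩ lassoRegion A) := by
  constructor
  · rintro ⟨hB, hA⟩
    refine ⟨augment A b s, ⟨hB, augment_mem_lassoRegion hs hA⟩, ?_⟩
    rw [Hmap_eq, activePart_augment s hA, subgradPart_augment hs hA, hkkt]
  · rintro ⟨z, ⟨hzB, hz⟩, hHz⟩
    obtain ⟨rfl, rfl⟩ := (isL1Subgradient_subgradPart hz).eq_of_kkt hC hw hlam hs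
      (by rw [← hkkt]; simpa only [Hmap_eq, sub_left_inj] using hHz)
    rw [augment_activePart_subgradPart]
    exact ⟨hzB, activePart_ne_zero_iff hz⟩

theorem Dmat_mulVec (A : Finset (Fin p)) (z : Fin p → ℝ) :
    Dmat C w lam A *ᵥ z =
      C *ᵥ activePart A z + fun i => if i ∈ A then 0 else lam * w i * z i := by
  funext i
  have hsummand : ∀ j, Dmat C w lam A i j * z j =
      C i j * activePart A z j + if i = j then (if j ∈ A then 0 else lam * w j * z j) else 0 := by
    intro j
    by_cases hj : j ∈ A <;> by_cases hij : i = j <;> simp [Dmat, activePart, hj, hij]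
  simp only [mulVec, dotProduct, hsummand, Finset.sum_add_distrib, Finset.sum_ite_eq,
    Finset.mem_univ, if_true, Pi.add_apply]

theorem Hmap_eq_Dmat_mulVec_add (A : Finset (Fin p)) (β : Fin p → ℝ) {σ z : Fin p → ℝ}
    (hσ : ∀ j ∈ A, Real.sign (z j) = σ j) :
    Hmap C w lam A β z =
      Dmat C w lam A *ᵥ z + ((fun i => if i ∈ A then lam * w i * σ i else 0) - C *ᵥ β) := by
  funext i
  rw [Dmat_mulVec]
  by_cases hi : i ∈ A
  · simp only [Hmap_eq, subgradPart, Pi.sub_apply, Pi.add_apply, hi, if_true, hσ i hi, add_zero]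
    ring
  · simp only [Hmap_eq, subgradPart, Pi.sub_apply, Pi.add_apply, hi, if_false]
    ring

theorem hasFDerivAt_Hmap (A : Finset (Fin p)) (β : Fin p → ℝ) {z : Fin p → ℝ}
    (hz : ∀ j ∈ A, z j ≠ 0) :
    HasFDerivAt (Hmap C w lam A β) (Matrix.toLin' (Dmat C w lam A)).toContinuousLinearMap z := by
  have hsign : ∀ᶠ z' in nhds z, ∀ j ∈ A, Real.sign (z' j) = Real.sign (z j) :=
    (Filter.eventually_all_finset A).2 fun j hj =>
      ((continuous_apply j).tendsto z).eventually (Real.eventually_sign_eq (hz j hj))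
  have haffine := ((Matrix.toLin' (Dmat C w lam A)).toContinuousLinearMap.hasFDerivAt
    (x := z)).add_const ((fun i => if i ∈ A then lam * w i * Real.sign (z i) else 0) - C *ᵥ β)
  refine haffine.congr_of_eventuallyEq ?_
  filter_upwards [hsign] with z' hz'
  simpa using Hmap_eq_Dmat_mulVec_add A β hz'

end Hmap

theorem augmented_estimator_density_low_dim_general {n p : ℕ}
    (X : Matrix (Fin n) (Fin p) ℝ) (hrank : X.rank = p)
    (w : Fin p → ℝ) (hw : ∀ j, 0 < w j) (lam : ℝ) (hlam : 0 < lam)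
    (β₀ : Fin p → ℝ)
    (Ω : Type*) [MeasurableSpace Ω] (ℙ : Measure Ω)
    (ε : Ω → Fin n → ℝ)
    -- the Lasso estimator and its subgradient, as (unique) minimizer of the loss for each y
    (bhat Shat : (Fin n → ℝ) → (Fin p → ℝ))
    (hsub : ∀ y, IsL1Subgradient (Shat y) (bhat y))
    (hKKT : ∀ y, (fun j => (n : ℝ)⁻¹ * Xᵀ.mulVec y j) =
      ((n : ℝ)⁻¹ • (Xᵀ * X)).mulVec (bhat y) + fun j => lam * w j * Shat y j)
    -- `U = Xᵀε/n` has density `fU` with respect to Lebesgue measure on ℝ^p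
    (fU : (Fin p → ℝ) → ℝ)
    (hfU : ∀ s : Set (Fin p → ℝ), MeasurableSet s →
      ℙ {ω | (fun j => (n : ℝ)⁻¹ * Xᵀ.mulVec (ε ω) j) ∈ s} =
        ∫⁻ u in s, ENNReal.ofReal (fU u)) :
    ∀ A : Finset (Fin p), ∀ B : Set (Fin p → ℝ), MeasurableSet B →
      ℙ {ω | (fun j => if j ∈ A then bhat (X.mulVec β₀ + ε ω) j
                else Shat (X.mulVec β₀ + ε ω) j) ∈ B ∧
             (∀ j, bhat (X.mulVec β₀ + ε ω) j ≠ 0 ↔ j ∈ A)} =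
      ∫⁻ z in B ∩ {z | (∀ j ∈ A, z j ≠ 0) ∧ (∀ j ∉ A, |z j| ≤ 1)},
        ENNReal.ofReal
          (fU (Hmap ((n : ℝ)⁻¹ • (Xᵀ * X)) w lam A β₀ z) *
            |(Dmat ((n : ℝ)⁻¹ • (Xᵀ * X)) w lam A).det|) := by
  intro A B hB
  change _ = ∫⁻ z in B ∩ lassoRegion A, _
  set C := (n : ℝ)⁻¹ • (Xᵀ * X)
  have hC : C.PosDef := posDef_inv_smul_transpose_mul_self_s3
    (mulVec_injective_of_rank_eq_card (by rwa [Fintype.card_fin]))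
  have hmeas : MeasurableSet (B ∩ lassoRegion A) := hB.inter (measurableSet_lassoRegion A)
  have hderiv : ∀ z ∈ B ∩ lassoRegion A, HasFDerivWithinAt (Hmap C w lam A β₀)
      (Matrix.toLin' (Dmat C w lam A)).toContinuousLinearMap (B ∩ lassoRegion A) z :=
    fun z hz => (hasFDerivAt_Hmap A β₀ hz.2.1).hasFDerivWithinAt
  have hinj := (injOn_Hmap hC hw hlam A β₀).mono (Set.inter_subset_right (s := B))
  have hevent : ∀ ω, ((fun j => if j ∈ A then bhat (X *ᵥ β₀ + ε ω) j
      else Shat (X *ᵥ β₀ + ε ω) j) ∈ B ∧ ∀ j, bhat (X *ᵥ β₀ + ε ω) j ≠ 0 ↔ j ∈ A) ↔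
      (fun j => (n : ℝ)⁻¹ * (Xᵀ *ᵥ ε ω) j) ∈ Hmap C w lam A β₀ '' (B ∩ lassoRegion A) := by
    intro ω
    rw [← inv_smul_transpose_mul_mulVec_add_sub X β₀]
    exact augment_mem_and_support_iff hC hw hlam A β₀ (hsub _) (hKKT _) B
  simp_rw [hevent, hfU _ (measurable_image_of_fderivWithin hmeas hderiv hinj),
    lintegral_image_eq_lintegral_abs_det_fderiv_mul volume hmeas hderiv hinj,
    ContinuousLinearMap.det, LinearMap.coe_toContinuousLinearMap, LinearMap.det_toLin',
    ENNReal.ofReal_mul' (abs_nonneg _), mul_comm]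

/-- Change-of-variables formula for the joint sampling distribution of the augmented Lasso
estimator `(β̂_A, S_I, 𝒜 = A)` in the low-dimensional setting, in terms of the density `f_U`
of `U = Xᵀε/n`. -/
theorem augmented_estimator_density_low_dim {n p : ℕ}
    (X : Matrix (Fin n) (Fin p) ℝ) (hpn : p ≤ n) (hrank : X.rank = p)
    (w : Fin p → ℝ) (hw : ∀ j, 0 < w j) (lam : ℝ) (hlam : 0 < lam)
    (β₀ : Fin p → ℝ)
    (Ω : Type*) [MeasurableSpace Ω] (ℙ : Measure Ω) [IsProbabilityMeasure ℙ]
    (ε : Ω → Fin n → ℝ) (hε : Measurable ε)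
    -- the Lasso estimator and its subgradient, as (unique) minimizer of the loss for each y
    (bhat Shat : (Fin n → ℝ) → (Fin p → ℝ))
    (hmin : ∀ y b, lassoLoss X y w lam (bhat y) ≤ lassoLoss X y w lam b)
    (huniq : ∀ y b, (∀ b', lassoLoss X y w lam b ≤ lassoLoss X y w lam b') → b = bhat y)
    (hsub : ∀ y, IsL1Subgradient (Shat y) (bhat y))
    (hKKT : ∀ y, (fun j => (n : ℝ)⁻¹ * Xᵀ.mulVec y j) =
      ((n : ℝ)⁻¹ • (Xᵀ * X)).mulVec (bhat y) + fun j => lam * w j * Shat y j)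
    -- `U = Xᵀε/n` has density `fU` with respect to Lebesgue measure on ℝ^p
    (fU : (Fin p → ℝ) → ℝ) (hfU0 : ∀ u, 0 ≤ fU u)
    (hfU : ∀ s : Set (Fin p → ℝ), MeasurableSet s →
      ℙ {ω | (fun j => (n : ℝ)⁻¹ * Xᵀ.mulVec (ε ω) j) ∈ s} =
        ∫⁻ u in s, ENNReal.ofReal (fU u)) :
    ∀ A : Finset (Fin p), ∀ B : Set (Fin p → ℝ), MeasurableSet B →
      ℙ {ω | (fun j => if j ∈ A then bhat (X.mulVec β₀ + ε ω) j
                else Shat (X.mulVec β₀ + ε ω) j) ∈ B ∧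
             (∀ j, bhat (X.mulVec β₀ + ε ω) j ≠ 0 ↔ j ∈ A)} =
      ∫⁻ z in B ∩ {z | (∀ j ∈ A, z j ≠ 0) ∧ (∀ j ∉ A, |z j| ≤ 1)},
        ENNReal.ofReal
          (fU (Hmap ((n : ℝ)⁻¹ • (Xᵀ * X)) w lam A β₀ z) *
            |(Dmat ((n : ℝ)⁻¹ • (Xᵀ * X)) w lam A).det|) :=
  augmented_estimator_density_low_dim_general X hrank w hw lam hlam β₀ Ω ℙ ε bhat Shat hsub hKKT fU
    hfU
end

section
/- Let X be an n×p real matrix with rank(X) = p, C = XᵀX/n (invertible), W = diag(w_1,…,w_p) with all w_j > 0, λ > 0, and define the loss ℓ_B(η, β) = (1/2)(η − β)ᵀC(η − β) + λ Σ_j w_j|η_j| for η, β ∈ R^p. Let μ be a probability measure on R^p with mean m = ∫β dμ(β) and ∫‖β‖₂² dμ(β) < ∞. Then η* minimizes η ↦ ∫ℓ_B(η, β) dμ(β) if and only if there exists a subgradient s of the ℓ₁ norm at η* with Cη* + λWs = Cm. In particular, if m = (XᵀX)^{-1}Xᵀy (the ordinary least-squares estimate), then η* equals the unique minimizer of the weighted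 Lasso loss ℓ(b) = (1/2)‖y − Xb‖₂² + nλ Σ_j w_j|b_j|. -/
open Matrix MeasureTheory

/-- The Bayesian decision loss `ℓ_B(η, β) = (1/2)(η − β)ᵀC(η − β) + λ Σ_j w_j|η_j|`. -/
noncomputable def bayesLoss {p : ℕ} (C : Matrix (Fin p) (Fin p) ℝ) (w : Fin p → ℝ)
    (lam : ℝ) (η β : Fin p → ℝ) : ℝ :=
  (1 / 2) * dotProduct (η - β) (C.mulVec (η - β)) + lam * ∑ j, w j * |η j|

/-!
For symmetric `C`, integrating `ℓ_B(η, β)` against `μ` leaves `F(η) + const`, where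
`F(η) = ½ ηᵀCη − (Cm)ᵀη + λ Σ_j w_j |η_j|` is `penalizedQuadratic C (C m) w λ`: only the mean
of `μ` matters. The KKT condition is sufficient for `F` because the subgradient inequality gives
quadratic growth, `F(η*) + ½ (η − η*)ᵀC(η − η*) ≤ F(η)`; it is necessary because comparing
`F(η* + t e_j)` with `F(η*)` as `t → 0±` shows that `(Cm − Cη*)_j / (λ w_j)` is a subgradient of
`|·|` at `η*_j`. When `Cm = Xᵀy / n` the Lasso loss is `n F` plus a constant, and `rank X = p`
makes `C` positive definite, so quadratic growth also gives uniqueness.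
-/

open Filter Topology

lemma abs_add_eq_of_abs_lt {x t : ℝ} (h : |t| < |x|) : |x + t| = |x| + Real.sign x * t := by
  rcases lt_trichotomy x 0 with hx | rfl | hx
  · rw [abs_of_neg hx] at h
    rw [Real.sign_of_neg hx, abs_of_neg hx, abs_of_neg (by linarith [le_abs_self t])]
    ring
  · exact absurd h (by simp)
  · rw [abs_of_pos hx] at h
    rw [Real.sign_of_pos hx, abs_of_pos hx, abs_of_pos (by linarith [neg_abs_le t])]
    ring

lemma nonpos_of_forall_mul_le_mul_sq {k c δ : ℝ} (hδ : 0 < δ)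
    (h : ∀ t ∈ Set.Ioo 0 δ, k * t ≤ c * t ^ 2) : k ≤ 0 := by
  have hlim : Tendsto (fun t : ℝ => c * t) (𝓝[>] 0) (𝓝 0) := by
    simpa using ((continuous_const_mul c).tendsto 0).mono_left nhdsWithin_le_nhds
  refine ge_of_tendsto hlim ?_
  filter_upwards [Ioo_mem_nhdsGT hδ] with t ht
  exact le_of_mul_le_mul_right (by linarith [h t ht]) ht.1

lemma abs_subgradient_of_forall_mul_le {g c x : ℝ}
    (h : ∀ t, g * t ≤ c * t ^ 2 + (|x + t| - |x|)) :
    (x ≠ 0 → g = Real.sign x) ∧ (x = 0 → |g| ≤ 1) := by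
  refine ⟨fun hx => ?_, fun hx => ?_⟩
  · have hlocal : ∀ t ∈ Set.Ioo 0 |x|,
        (g - Real.sign x) * t ≤ c * t ^ 2 ∧ (Real.sign x - g) * t ≤ c * t ^ 2 := by
      intro t ⟨ht0, htx⟩
      have hplus := h t
      have hminus := h (-t)
      rw [abs_add_eq_of_abs_lt (by rwa [abs_of_pos ht0])] at hplus
      rw [abs_add_eq_of_abs_lt (by rwa [abs_neg, abs_of_pos ht0])] at hminus
      constructor <;> linarith
    have h1 := nonpos_of_forall_mul_le_mul_sq (abs_pos.2 hx) fun t ht => (hlocal t ht).1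
    have h2 := nonpos_of_forall_mul_le_mul_sq (abs_pos.2 hx) fun t ht => (hlocal t ht).2
    linarith
  · subst hx
    have hlocal : ∀ t ∈ Set.Ioo (0 : ℝ) 1, (g - 1) * t ≤ c * t ^ 2 ∧ (-g - 1) * t ≤ c * t ^ 2 := by
      intro t ⟨ht0, _⟩
      have hplus := h t
      have hminus := h (-t)
      simp only [zero_add, abs_zero, sub_zero, abs_neg, abs_of_pos ht0] at hplus hminus
      constructor <;> linarith
    have h1 := nonpos_of_forall_mul_le_mul_sq one_pos fun t ht => (hlocal t ht).1
    have h2 := nonpos_of_forall_mul_le_mul_sq one_pos fun t ht => (hlocal t ht).2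
    rw [abs_le]
    constructor <;> linarith

lemma Matrix.IsSymm.dotProduct_mulVec_comm {ι R : Type*} [Fintype ι] [CommSemiring R]
    {C : Matrix ι ι R} (hC : C.IsSymm) (x y : ι → R) : x ⬝ᵥ C *ᵥ y = y ⬝ᵥ C *ᵥ x := by
  rw [dotProduct_mulVec, ← mulVec_transpose, hC.eq, dotProduct_comm]

lemma Matrix.PosSemidef.isSymm {ι : Type*} {C : Matrix ι ι ℝ} (hC : C.PosSemidef) : C.IsSymm :=
  isHermitian_iff_isSymm.1 hC.isHermitian

lemma IsL1Subgradient.mul_le_abs_add_sub {p : ℕ} {s x : Fin p → ℝ} (hs : IsL1Subgradient s x)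
    (j : Fin p) (t : ℝ) : s j * t ≤ |x j + t| - |x j| := by
  rcases lt_trichotomy (x j) 0 with hx | hx | hx
  · rw [(hs j).1 hx.ne, Real.sign_of_neg hx, abs_of_neg hx]
    linarith [neg_le_abs (x j + t)]
  · rw [hx, zero_add, abs_zero, sub_zero]
    calc s j * t ≤ |s j| * |t| := (le_abs_self _).trans (abs_mul _ _).le
      _ ≤ |t| := mul_le_of_le_one_left (abs_nonneg t) ((hs j).2 hx)
  · rw [(hs j).1 hx.ne', Real.sign_of_pos hx, abs_of_pos hx]
    linarith [le_abs_self (x j + t)]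

section PenalizedQuadratic

variable {ι : Type*} [Fintype ι]

noncomputable def penalizedQuadratic (C : Matrix ι ι ℝ) (v w : ι → ℝ) (lam : ℝ)
    (η : ι → ℝ) : ℝ :=
  (1 / 2) * (η ⬝ᵥ C *ᵥ η) - v ⬝ᵥ η + lam * ∑ j, w j * |η j|

lemma penalizedQuadratic_add_sub {C : Matrix ι ι ℝ} (hC : C.IsSymm) (v w η d : ι → ℝ)
    (lam : ℝ) :
    penalizedQuadratic C v w lam (η + d) - penalizedQuadratic C v w lam η =
      (1 / 2) * (d ⬝ᵥ C *ᵥ d) + (C *ᵥ η - v) ⬝ᵥ d +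
        lam * ∑ j, w j * (|η j + d j| - |η j|) := by
  simp only [penalizedQuadratic, mulVec_add, dotProduct_add, add_dotProduct, sub_dotProduct,
    Pi.add_apply, mul_sub, Finset.sum_sub_distrib, hC.dotProduct_mulVec_comm d η,
    dotProduct_comm (C *ᵥ η) d]
  ring

end PenalizedQuadratic

section KKT

variable {p : ℕ} {C : Matrix (Fin p) (Fin p) ℝ} {v w : Fin p → ℝ} {lam : ℝ}

lemma penalizedQuadratic_add_quadratic_le {s η₀ : Fin p → ℝ} (hC : C.IsSymm) (hlam : 0 ≤ lam)
    (hw : ∀ j, 0 ≤ w j) (hs : IsL1Subgradient s η₀)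
    (hv : C *ᵥ η₀ + (fun j => lam * w j * s j) = v) (η : Fin p → ℝ) :
    penalizedQuadratic C v w lam η₀ + (1 / 2) * ((η - η₀) ⬝ᵥ C *ᵥ (η - η₀)) ≤
      penalizedQuadratic C v w lam η := by
  subst hv
  have hexp :=
    penalizedQuadratic_add_sub hC (C *ᵥ η₀ + fun j => lam * w j * s j) w η₀ (η - η₀) lam
  rw [add_sub_cancel, sub_add_cancel_left, neg_dotProduct] at hexp
  have hpen : (fun j => lam * w j * s j) ⬝ᵥ (η - η₀) ≤
      lam * ∑ j, w j * (|η₀ j + (η - η₀) j| - |η₀ j|) := by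
    rw [dotProduct, Finset.mul_sum]
    refine Finset.sum_le_sum fun j _ => ?_
    calc lam * w j * s j * (η - η₀) j = lam * w j * (s j * (η - η₀) j) := by ring
      _ ≤ lam * w j * (|η₀ j + (η - η₀) j| - |η₀ j|) :=
        mul_le_mul_of_nonneg_left (hs.mul_le_abs_add_sub j _) (mul_nonneg hlam (hw j))
      _ = _ := by ring
  linarith

lemma penalizedQuadratic_add_single_sub (hC : C.IsSymm) (η : Fin p → ℝ) (j : Fin p) (t : ℝ) :
    penalizedQuadratic C v w lam (η + Pi.single j t) - penalizedQuadratic C v w lam η =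
      (1 / 2) * (C j j * t ^ 2) - (v - C *ᵥ η) j * t + lam * w j * (|η j + t| - |η j|) := by
  rw [penalizedQuadratic_add_sub hC,
    Fintype.sum_eq_single j fun k hk => by simp [Pi.single_eq_of_ne hk]]
  simp only [mulVec_single, op_smul_eq_smul, dotProduct_smul, single_dotProduct, col_apply,
    smul_eq_mul, dotProduct_single, Pi.sub_apply, Pi.single_eq_same]
  ring

lemma exists_isL1Subgradient_of_isMinimizer {η₀ : Fin p → ℝ} (hC : C.IsSymm) (hlam : 0 < lam)
    (hw : ∀ j, 0 < w j)
    (hmin : ∀ η, penalizedQuadratic C v w lam η₀ ≤ penalizedQuadratic C v w lam η) :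
    ∃ s, IsL1Subgradient s η₀ ∧ C *ᵥ η₀ + (fun j => lam * w j * s j) = v := by
  set g := v - C *ᵥ η₀
  have hlw : ∀ j, 0 < lam * w j := fun j => mul_pos hlam (hw j)
  refine ⟨fun j => g j / (lam * w j), fun j => ?_, ?_⟩
  · refine abs_subgradient_of_forall_mul_le (c := C j j / (2 * (lam * w j))) fun t => ?_
    have hgain :
        0 ≤ (1 / 2) * (C j j * t ^ 2) - g j * t + lam * w j * (|η₀ j + t| - |η₀ j|) := by
      rw [← penalizedQuadratic_add_single_sub hC]
      exact sub_nonneg.2 (hmin _)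
    have hl := hlam.ne'
    have hwj := (hw j).ne'
    rw [← sub_nonneg]
    refine (div_nonneg hgain (hlw j).le).trans_eq ?_
    field_simp
    ring
  · ext j
    simp [g, mul_div_cancel₀ _ (hlw j).ne']

theorem isMinimizer_penalizedQuadratic_iff {η₀ : Fin p → ℝ} (hC : C.PosSemidef) (hlam : 0 < lam)
    (hw : ∀ j, 0 < w j) :
    (∀ η, penalizedQuadratic C v w lam η₀ ≤ penalizedQuadratic C v w lam η) ↔
      ∃ s, IsL1Subgradient s η₀ ∧ C *ᵥ η₀ + (fun j => lam * w j * s j) = v := by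
  refine ⟨exists_isL1Subgradient_of_isMinimizer hC.isSymm hlam hw, fun ⟨s, hs, hv⟩ η => ?_⟩
  have hgrowth :=
    penalizedQuadratic_add_quadratic_le hC.isSymm hlam.le (fun j => (hw j).le) hs hv η
  have hnonneg := hC.dotProduct_mulVec_nonneg (η - η₀)
  rw [star_trivial] at hnonneg
  linarith

lemma eq_of_isMinimizer_penalizedQuadratic {a b : Fin p → ℝ} (hC : C.PosDef) (hlam : 0 < lam)
    (hw : ∀ j, 0 < w j)
    (ha : ∀ η, penalizedQuadratic C v w lam a ≤ penalizedQuadratic C v w lam η)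
    (hb : ∀ η, penalizedQuadratic C v w lam b ≤ penalizedQuadratic C v w lam η) : b = a := by
  obtain ⟨s, hs, hv⟩ := exists_isL1Subgradient_of_isMinimizer hC.posSemidef.isSymm hlam hw ha
  have hgrowth := penalizedQuadratic_add_quadratic_le hC.posSemidef.isSymm hlam.le
    (fun j => (hw j).le) hs hv b
  by_contra hne
  have hpos := hC.dotProduct_mulVec_pos (sub_ne_zero.2 hne)
  rw [star_trivial] at hpos
  linarith [hb a]

end KKT

namespace MeasureTheory

variable {α ι : Type*} [MeasurableSpace α] {μ : Measure α} [Fintype ι]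

lemma Integrable.const_dotProduct (u : ι → ℝ) {f : α → ι → ℝ} (hf : Integrable f μ) :
    Integrable (fun x => u ⬝ᵥ f x) μ :=
  integrable_finsetSum _ fun i _ => (hf.eval i).const_mul (u i)

lemma integral_const_dotProduct (u : ι → ℝ) {f : α → ι → ℝ} (hf : Integrable f μ) :
    ∫ x, u ⬝ᵥ f x ∂μ = u ⬝ᵥ ∫ x, f x ∂μ := by
  simp only [dotProduct]
  rw [integral_finsetSum _ fun i _ => (hf.eval i).const_mul (u i)]
  simp [integral_const_mul, eval_integral hf.eval]

lemma MemLp.mulVec {p : ENNReal} (C : Matrix ι ι ℝ) {f : α → ι → ℝ} (hf : MemLp f p μ) :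
    MemLp (fun x => C *ᵥ f x) p μ :=
  C.mulVecLin.toContinuousLinearMap.comp_memLp' hf

lemma MemLp.integrable_dotProduct {f g : α → ι → ℝ} (hf : MemLp f 2 μ) (hg : MemLp g 2 μ) :
    Integrable (fun x => f x ⬝ᵥ g x) μ :=
  integrable_finsetSum _ fun i _ => (hf.eval i).integrable_mul (hg.eval i)

end MeasureTheory

theorem integral_bayesLoss {p : ℕ} {C : Matrix (Fin p) (Fin p) ℝ} (hC : C.IsSymm)
    {μ : Measure (Fin p → ℝ)} [IsProbabilityMeasure μ]
    (hμ : Integrable (fun β : Fin p → ℝ => ‖β‖ ^ 2) μ) (w : Fin p → ℝ) (lam : ℝ)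
    (η : Fin p → ℝ) :
    ∫ β, bayesLoss C w lam η β ∂μ =
      penalizedQuadratic C (C *ᵥ ∫ β, β ∂μ) w lam η + (1 / 2) * ∫ β, β ⬝ᵥ C *ᵥ β ∂μ := by
  have hL2 : MemLp (fun β : Fin p → ℝ => β) 2 μ :=
    (memLp_two_iff_integrable_sq_norm aestronglyMeasurable_id).2 hμ
  have hint : Integrable (fun β : Fin p → ℝ => β) μ := hL2.integrable one_le_two
  have hlin : Integrable (fun β => (C *ᵥ η) ⬝ᵥ β) μ := hint.const_dotProduct _
  have hquad : Integrable (fun β => β ⬝ᵥ C *ᵥ β) μ := hL2.integrable_dotProduct (hL2.mulVec C)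
  have hpoint : ∀ β, bayesLoss C w lam η β =
      ((1 / 2) * (η ⬝ᵥ C *ᵥ η) + lam * ∑ j, w j * |η j| - (C *ᵥ η) ⬝ᵥ β) +
        (1 / 2) * (β ⬝ᵥ C *ᵥ β) := by
    intro β
    simp only [bayesLoss, mulVec_sub, dotProduct_sub, sub_dotProduct,
      hC.dotProduct_mulVec_comm β η, dotProduct_comm (C *ᵥ η) β]
    ring
  simp_rw [hpoint]
  rw [integral_add (f := fun β => _ - (C *ᵥ η) ⬝ᵥ β) ((integrable_const _).sub hlin)
      (hquad.const_mul _),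
    integral_sub (integrable_const _) hlin, integral_const,
    integral_const_dotProduct _ hint, integral_const_mul]
  simp only [penalizedQuadratic, probReal_univ, one_smul, dotProduct_comm (C *ᵥ η),
    hC.dotProduct_mulVec_comm _ η]
  rw [dotProduct_comm (C *ᵥ _) η]
  ring

lemma Matrix.mulVec_injective_of_rank_eq_card_s7 {K m k : Type*} [Field K] [Fintype k]
    {A : Matrix m k K} (hA : A.rank = Fintype.card k) : Function.Injective A.mulVec := by
  have hdim := LinearMap.finrank_range_add_finrank_ker A.mulVecLin
  rwa [← Matrix.rank, hA, Module.finrank_fintype_fun_eq_card, add_eq_left,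
    Submodule.finrank_eq_zero, LinearMap.ker_eq_bot] at hdim

section Lasso

variable {n p : ℕ} (X : Matrix (Fin n) (Fin p) ℝ)

lemma lassoLoss_eq (hn : (n : ℝ) ≠ 0) (y : Fin n → ℝ) (w : Fin p → ℝ) (lam : ℝ)
    (b : Fin p → ℝ) :
    lassoLoss X y w lam b = n * penalizedQuadratic ((n : ℝ)⁻¹ • (Xᵀ * X))
      ((n : ℝ)⁻¹ • (Xᵀ *ᵥ y)) w lam b + (1 / 2) * ∑ i, y i ^ 2 := by
  have hquad : b ⬝ᵥ (Xᵀ * X) *ᵥ b = ∑ i, (X *ᵥ b) i ^ 2 := by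
    rw [← mulVec_mulVec, dotProduct_mulVec, ← mulVec_transpose, transpose_transpose]
    simp [dotProduct, sq]
  have hcross : (Xᵀ *ᵥ y) ⬝ᵥ b = ∑ i, y i * (X *ᵥ b) i := by
    rw [mulVec_transpose, ← dotProduct_mulVec]
    rfl
  have hsq : ∑ i, (y i - (X *ᵥ b) i) ^ 2 =
      ∑ i, y i ^ 2 - 2 * ∑ i, y i * (X *ᵥ b) i + ∑ i, (X *ᵥ b) i ^ 2 := by
    simp only [sub_sq, Finset.sum_add_distrib, Finset.sum_sub_distrib, Finset.mul_sum, mul_assoc]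
  simp only [lassoLoss, penalizedQuadratic, smul_mulVec, dotProduct_smul, smul_dotProduct,
    smul_eq_mul, hquad, hcross, hsq]
  field_simp
  ring

lemma lassoLoss_le_lassoLoss_iff (hn : 0 < n) (y : Fin n → ℝ) (w : Fin p → ℝ) (lam : ℝ)
    (a b : Fin p → ℝ) :
    lassoLoss X y w lam a ≤ lassoLoss X y w lam b ↔
      penalizedQuadratic ((n : ℝ)⁻¹ • (Xᵀ * X)) ((n : ℝ)⁻¹ • (Xᵀ *ᵥ y)) w lam a ≤
        penalizedQuadratic ((n : ℝ)⁻¹ • (Xᵀ * X)) ((n : ℝ)⁻¹ • (Xᵀ *ᵥ y)) w lam b := by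
  have hn' : (0 : ℝ) < n := Nat.cast_pos.2 hn
  rw [lassoLoss_eq X hn'.ne', lassoLoss_eq X hn'.ne', add_le_add_iff_right,
    mul_le_mul_iff_right₀ hn']

end Lasso

theorem bayes_loss_minimizer_general {n p : ℕ}
    (X : Matrix (Fin n) (Fin p) ℝ) (hrank : X.rank = p)
    (w : Fin p → ℝ) (hw : ∀ j, 0 < w j) (lam : ℝ) (hlam : 0 < lam)
    (μ : Measure (Fin p → ℝ)) [IsProbabilityMeasure μ]
    (m : Fin p → ℝ) (hm : m = ∫ b, b ∂μ)
    (hmom : Integrable (fun b : Fin p → ℝ => ‖b‖ ^ 2) μ) :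
    (∀ ηstar : Fin p → ℝ,
      ((∀ η, ∫ b, bayesLoss ((n : ℝ)⁻¹ • (Xᵀ * X)) w lam ηstar b ∂μ ≤
          ∫ b, bayesLoss ((n : ℝ)⁻¹ • (Xᵀ * X)) w lam η b ∂μ) ↔
        (∃ s : Fin p → ℝ, IsL1Subgradient s ηstar ∧
          ((n : ℝ)⁻¹ • (Xᵀ * X)).mulVec ηstar + (fun j => lam * w j * s j) =
            ((n : ℝ)⁻¹ • (Xᵀ * X)).mulVec m))) ∧
    (∀ y : Fin n → ℝ, m = ((Xᵀ * X)⁻¹ * Xᵀ).mulVec y →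
      ∀ ηstar : Fin p → ℝ,
        (∀ η, ∫ b, bayesLoss ((n : ℝ)⁻¹ • (Xᵀ * X)) w lam ηstar b ∂μ ≤
          ∫ b, bayesLoss ((n : ℝ)⁻¹ • (Xᵀ * X)) w lam η b ∂μ) →
        ((∀ b, lassoLoss X y w lam ηstar ≤ lassoLoss X y w lam b) ∧
          (∀ b, (∀ b', lassoLoss X y w lam b ≤ lassoLoss X y w lam b') → b = ηstar))) := by
  set C := (n : ℝ)⁻¹ • (Xᵀ * X)
  have hC : C.PosSemidef := by
    simpa using (posSemidef_conjTranspose_mul_self X).smul (inv_nonneg.2 (Nat.cast_nonneg n))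
  have hbayes : ∀ ηstar,
      (∀ η, ∫ b, bayesLoss C w lam ηstar b ∂μ ≤ ∫ b, bayesLoss C w lam η b ∂μ) ↔
        ∀ η, penalizedQuadratic C (C *ᵥ m) w lam ηstar ≤ penalizedQuadratic C (C *ᵥ m) w lam η := by
    simp only [integral_bayesLoss hC.isSymm hmom, ← hm, add_le_add_iff_right, implies_true]
  refine ⟨fun ηstar => (hbayes ηstar).trans (isMinimizer_penalizedQuadratic_iff hC hlam hw),
    fun y hy ηstar hηstar => ?_⟩
  rcases p.eq_zero_or_pos with rfl | hp
  · exact ⟨fun b => by rw [Subsingleton.elim b ηstar], fun b _ => Subsingleton.elim b ηstar⟩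
  have hn : 0 < n := hp.trans_le (hrank ▸ X.rank_le_height)
  have hX := X.mulVec_injective_of_rank_eq_card_s7 (by rw [hrank, Fintype.card_fin])
  have hgram : (Xᵀ * X).PosDef := by simpa using PosDef.conjTranspose_mul_self X hX
  have hCm : C *ᵥ m = (n : ℝ)⁻¹ • (Xᵀ *ᵥ y) := by
    rw [hy, smul_mulVec, mulVec_mulVec, ← Matrix.mul_assoc,
      mul_nonsing_inv _ ((isUnit_iff_isUnit_det _).1 hgram.isUnit), Matrix.one_mul]
  have hCpos : C.PosDef := hgram.smul (inv_pos.2 (Nat.cast_pos.2 hn))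
  have hmin := (hbayes ηstar).1 hηstar
  rw [hCm] at hmin
  simp only [lassoLoss_le_lassoLoss_iff X hn]
  exact ⟨hmin, fun b hb => eq_of_isMinimizer_penalizedQuadratic hCpos hlam hw hmin hb⟩

/-- `η*` minimizes the posterior expected loss `∫ ℓ_B(η, β) dμ(β)` iff there is an ℓ₁
subgradient `s` at `η*` with `Cη* + λWs = Cm`, where `m` is the mean of `μ`; and when
`m` is the OLS estimate, a minimizer `η*` is the unique weighted Lasso minimizer. -/
theorem bayes_loss_minimizer {n p : ℕ}
    (X : Matrix (Fin n) (Fin p) ℝ) (hpn : p ≤ n) (hrank : X.rank = p)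
    (w : Fin p → ℝ) (hw : ∀ j, 0 < w j) (lam : ℝ) (hlam : 0 < lam)
    (μ : Measure (Fin p → ℝ)) [IsProbabilityMeasure μ]
    (m : Fin p → ℝ) (hm : m = ∫ b, b ∂μ)
    (hmom : Integrable (fun b : Fin p → ℝ => ‖b‖ ^ 2) μ) :
    (∀ ηstar : Fin p → ℝ,
      ((∀ η, ∫ b, bayesLoss ((n : ℝ)⁻¹ • (Xᵀ * X)) w lam ηstar b ∂μ ≤
          ∫ b, bayesLoss ((n : ℝ)⁻¹ • (Xᵀ * X)) w lam η b ∂μ) ↔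
        (∃ s : Fin p → ℝ, IsL1Subgradient s ηstar ∧
          ((n : ℝ)⁻¹ • (Xᵀ * X)).mulVec ηstar + (fun j => lam * w j * s j) =
            ((n : ℝ)⁻¹ • (Xᵀ * X)).mulVec m))) ∧
    (∀ y : Fin n → ℝ, m = ((Xᵀ * X)⁻¹ * Xᵀ).mulVec y →
      ∀ ηstar : Fin p → ℝ,
        (∀ η, ∫ b, bayesLoss ((n : ℝ)⁻¹ • (Xᵀ * X)) w lam ηstar b ∂μ ≤
          ∫ b, bayesLoss ((n : ℝ)⁻¹ • (Xᵀ * X)) w lam η b ∂μ) →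
        ((∀ b, lassoLoss X y w lam ηstar ≤ lassoLoss X y w lam b) ∧
          (∀ b, (∀ b', lassoLoss X y w lam b ≤ lassoLoss X y w lam b') → b = ηstar))) :=
  bayes_loss_minimizer_general X hrank w hw lam hlam μ m hm hmom
end

section
/- Consider y = Xβ₀ + ε with X a fixed n×p matrix whose columns are in general position, so that for every y and λ > 0 the weighted Lasso minimizer β̂ is unique. Let A₀ = supp(β₀) with C_{A₀A₀} positive definite, I₀ = {1,…,p}\A₀, s₀ = sgn(β₀_{A₀}), D(A₀) = (C_{A₀} | λW_{I₀}) (invertible), U = Xᵀε/n, μ⁰ = D(A₀)^{-1}(Cβ₀ − λW_{A₀}s₀), and Z = D(A₀)^{-1}U + μ⁰ ∈ R^p. Then the event {supp(β̂) = A₀ and sgn(β̂_{A₀}) = s₀} coincides exactly with the event {Z ∈ Ω_{A₀,s₀}}, where Z ∈ Ω_{A₀,s₀} means sgn(Z_j) = s₀_j for all j ∈ A₀ and |Z_j| ≤ 1 for all j ∈ I₀; on this event, (β̂_{A₀}, S_{I₀}) = Z, where S is the Lasso subgradient. Consequently P(supp(β̂) = A₀, sgn(β̂_{A₀}) = s₀)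 = P(Z ∈ Ω_{A₀,s₀}) for any n ≥ 1 and p ≥ 1, regardless of the relative size of n and p. -/
open Matrix MeasureTheory

/-
On the sign pattern `(A, σ)` (support of `b̂` equal to `A`, `sgn b̂ = σ` on `A`) the subgradient is
pinned to `σ` on `A` and `b̂` vanishes off `A`, so the KKT system `Xᵀy/n = C b̂ + λ W S` becomes the
*linear* system `D(A) (b̂_A, S_I) = Xᵀy/n − λ W_A σ`, whose unique solution is `Z`. Conversely, if
`Z` has the right signs on `A` and `|Z| ≤ 1` off `A`, unpacking `Z` gives a pair satisfying the KKT
conditions with this sign pattern, and uniqueness of the KKT solution identifies it with `(b̂, S)`.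
-/

section KKT

variable {p : ℕ} {C : Matrix (Fin p) (Fin p) ℝ} {w : Fin p → ℝ} {lam : ℝ} {A : Finset (Fin p)}
  {σ g b s z : Fin p → ℝ}

theorem Dmat_mulVec_piecewise_add (hb : ∀ j ∉ A, b j = 0) :
    Dmat C w lam A *ᵥ A.piecewise b s + (fun j => if j ∈ A then lam * w j * s j else 0) =
      C *ᵥ b + fun j => lam * w j * s j := by
  ext i
  have hterm : ∀ j, Dmat C w lam A i j * A.piecewise b s j =
      C i j * b j + if i = j then (if j ∈ A then 0 else lam * w j * s j) else 0 := by
    intro j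
    by_cases hj : j ∈ A <;> by_cases hij : i = j <;> simp [Dmat, hj, hij, hb]
  simp only [Pi.add_apply, mulVec, dotProduct, hterm, Finset.sum_add_distrib, Finset.sum_ite_eq,
    Finset.mem_univ, if_true]
  split_ifs <;> ring

theorem kkt_iff_Dmat_mulVec_piecewise (hb : ∀ j ∉ A, b j = 0) (hs : ∀ j ∈ A, s j = σ j) :
    g = C *ᵥ b + (fun j => lam * w j * s j) ↔
      Dmat C w lam A *ᵥ A.piecewise b s = g - fun j => if j ∈ A then lam * w j * σ j else 0 := by
  have hσ : (fun j => if j ∈ A then lam * w j * σ j else 0) =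
      fun j => if j ∈ A then lam * w j * s j else 0 := by
    ext j; split_ifs with hj <;> simp [hs j, hj]
  rw [hσ, eq_sub_iff_add_eq, Dmat_mulVec_piecewise_add hb, eq_comm]

theorem piecewise_eq_of_kkt_of_signPattern (hD : IsUnit (Dmat C w lam A).det)
    (hz : Dmat C w lam A *ᵥ z = g - fun j => if j ∈ A then lam * w j * σ j else 0)
    (hsub : IsL1Subgradient s b) (hkkt : g = C *ᵥ b + fun j => lam * w j * s j)
    (hsupp : ∀ j, b j ≠ 0 ↔ j ∈ A) (hsign : ∀ j ∈ A, Real.sign (b j) = σ j) :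
    A.piecewise b s = z := by
  have hb : ∀ j ∉ A, b j = 0 := fun j hj => not_not.mp (mt (hsupp j).mp hj)
  have hs : ∀ j ∈ A, s j = σ j := fun j hj => by
    rw [(hsub j).1 ((hsupp j).mpr hj), hsign j hj]
  refine mulVec_injective_of_isUnit ((isUnit_iff_isUnit_det _).mpr hD) ?_
  rw [hz, ← kkt_iff_Dmat_mulVec_piecewise hb hs]
  exact hkkt

theorem isL1Subgradient_piecewise (hσ : ∀ j ∈ A, σ j ≠ 0)
    (hsign : ∀ j ∈ A, Real.sign (z j) = σ j) (hbound : ∀ j ∉ A, |z j| ≤ 1) :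
    IsL1Subgradient (A.piecewise σ z) (A.piecewise z 0) := by
  intro j
  by_cases hj : j ∈ A
  · have hzj : z j ≠ 0 := fun h => hσ j hj (by rw [← hsign j hj, h, Real.sign_zero])
    simp [hj, hzj, hsign j hj]
  · simp [hj, hbound j hj]

theorem signPattern_iff_of_kkt (hD : IsUnit (Dmat C w lam A).det) (hσ : ∀ j ∈ A, σ j ≠ 0)
    (hz : Dmat C w lam A *ᵥ z = g - fun j => if j ∈ A then lam * w j * σ j else 0)
    (hsub : IsL1Subgradient s b) (hkkt : g = C *ᵥ b + fun j => lam * w j * s j)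
    (huniq : ∀ b' s' : Fin p → ℝ, IsL1Subgradient s' b' →
      g = C *ᵥ b' + (fun j => lam * w j * s' j) → b' = b ∧ s' = s) :
    ((∀ j, b j ≠ 0 ↔ j ∈ A) ∧ ∀ j ∈ A, Real.sign (b j) = σ j) ↔
      (∀ j ∈ A, Real.sign (z j) = σ j) ∧ ∀ j ∉ A, |z j| ≤ 1 := by
  constructor
  · rintro ⟨hsupp, hsign⟩
    have hpw := piecewise_eq_of_kkt_of_signPattern hD hz hsub hkkt hsupp hsign
    refine ⟨fun j hj => ?_, fun j hj => ?_⟩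
    · rw [← hpw, A.piecewise_eq_of_mem _ _ hj, hsign j hj]
    · rw [← hpw, A.piecewise_eq_of_notMem _ _ hj]
      exact (hsub j).2 (not_not.mp (mt (hsupp j).mp hj))
  · rintro ⟨hsign, hbound⟩
    have hcand := isL1Subgradient_piecewise hσ hsign hbound
    have hcand_kkt : g = C *ᵥ A.piecewise z 0 + fun j => lam * w j * A.piecewise σ z j := by
      rw [kkt_iff_Dmat_mulVec_piecewise (fun j hj => by simp [hj])
        (fun j hj => A.piecewise_eq_of_mem _ _ hj), ← hz]
      congr 1
      ext j; by_cases hj : j ∈ A <;> simp [hj]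
    obtain ⟨rfl, -⟩ := huniq _ _ hcand hcand_kkt
    refine ⟨fun j => ?_, fun j hj => ?_⟩
    · by_cases hj : j ∈ A
      · simpa [hj] using fun h => hσ j hj (by rw [← hsign j hj, h, Real.sign_zero])
      · simp [hj]
    · simpa [hj] using hsign j hj

end KKT

theorem gram_mulVec_add {n p : ℕ} (X : Matrix (Fin n) (Fin p) ℝ) (β : Fin p → ℝ)
    (ε : Fin n → ℝ) :
    (fun j => (n : ℝ)⁻¹ * (Xᵀ *ᵥ (X *ᵥ β + ε)) j) =
      ((n : ℝ)⁻¹ • (Xᵀ * X)) *ᵥ β + fun j => (n : ℝ)⁻¹ * (Xᵀ *ᵥ ε) j := by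
  ext j
  simp [mulVec_add, smul_mulVec, ← mulVec_mulVec, mul_add]

theorem sign_recovery_event_eq_general {n p : ℕ}
    (X : Matrix (Fin n) (Fin p) ℝ)
    (w : Fin p → ℝ) (lam : ℝ)
    (β₀ : Fin p → ℝ) (A₀ : Finset (Fin p)) (hA₀ : ∀ j, j ∈ A₀ ↔ β₀ j ≠ 0)
    (hD : IsUnit (Dmat ((n : ℝ)⁻¹ • (Xᵀ * X)) w lam A₀).det)
    -- the Lasso estimator and its subgradient (columns of X in general position:
    -- the KKT system has a unique solution for every response)
    (bhat Shat : (Fin n → ℝ) → (Fin p → ℝ))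
    (hsub : ∀ y, IsL1Subgradient (Shat y) (bhat y))
    (hKKT : ∀ y, (fun j => (n : ℝ)⁻¹ * Xᵀ.mulVec y j) =
      ((n : ℝ)⁻¹ • (Xᵀ * X)).mulVec (bhat y) + fun j => lam * w j * Shat y j)
    (huniq : ∀ y (b s : Fin p → ℝ), IsL1Subgradient s b →
      ((fun j => (n : ℝ)⁻¹ * Xᵀ.mulVec y j) =
        ((n : ℝ)⁻¹ • (Xᵀ * X)).mulVec b + fun j => lam * w j * s j) →
      b = bhat y ∧ s = Shat y)
    -- Z = D(A₀)⁻¹ U + μ⁰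
    (μ0 : Fin p → ℝ)
    (hμ0 : μ0 = (Dmat ((n : ℝ)⁻¹ • (Xᵀ * X)) w lam A₀)⁻¹.mulVec
      (((n : ℝ)⁻¹ • (Xᵀ * X)).mulVec β₀ -
        fun j => if j ∈ A₀ then lam * w j * Real.sign (β₀ j) else 0))
    (Z : (Fin n → ℝ) → (Fin p → ℝ))
    (hZ : ∀ ε, Z ε = (Dmat ((n : ℝ)⁻¹ • (Xᵀ * X)) w lam A₀)⁻¹.mulVec
      (fun j => (n : ℝ)⁻¹ * Xᵀ.mulVec ε j) + μ0) :
    (∀ ε : Fin n → ℝ,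
      (((∀ j, bhat (X.mulVec β₀ + ε) j ≠ 0 ↔ j ∈ A₀) ∧
        (∀ j ∈ A₀, Real.sign (bhat (X.mulVec β₀ + ε) j) = Real.sign (β₀ j))) ↔
       ((∀ j ∈ A₀, Real.sign (Z ε j) = Real.sign (β₀ j)) ∧
        (∀ j ∉ A₀, |Z ε j| ≤ 1))) ∧
      (((∀ j, bhat (X.mulVec β₀ + ε) j ≠ 0 ↔ j ∈ A₀) ∧
        (∀ j ∈ A₀, Real.sign (bhat (X.mulVec β₀ + ε) j) = Real.sign (β₀ j))) →
       ((∀ j ∈ A₀, bhat (X.mulVec β₀ + ε) j = Z ε j) ∧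
        (∀ j ∉ A₀, Shat (X.mulVec β₀ + ε) j = Z ε j)))) ∧
    (∀ (Ω : Type) (_m : MeasurableSpace Ω) (Pr : Measure Ω) (εr : Ω → Fin n → ℝ),
      Pr {ω | (∀ j, bhat (X.mulVec β₀ + εr ω) j ≠ 0 ↔ j ∈ A₀) ∧
              (∀ j ∈ A₀, Real.sign (bhat (X.mulVec β₀ + εr ω) j) = Real.sign (β₀ j))} =
      Pr {ω | (∀ j ∈ A₀, Real.sign (Z (εr ω) j) = Real.sign (β₀ j)) ∧
              (∀ j ∉ A₀, |Z (εr ω) j| ≤ 1)}) := by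
  set D := Dmat ((n : ℝ)⁻¹ • (Xᵀ * X)) w lam A₀
  have hσ : ∀ j ∈ A₀, Real.sign (β₀ j) ≠ 0 := fun j hj =>
    mt Real.sign_eq_zero_iff.mp ((hA₀ j).mp hj)
  have hDZ : ∀ ε, D *ᵥ Z ε = (fun j => (n : ℝ)⁻¹ * (Xᵀ *ᵥ (X *ᵥ β₀ + ε)) j) -
      fun j => if j ∈ A₀ then lam * w j * Real.sign (β₀ j) else 0 := fun ε => by
    rw [hZ, hμ0, mulVec_add, mulVec_mulVec, mulVec_mulVec, mul_nonsing_inv _ hD, one_mulVec,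
      one_mulVec, gram_mulVec_add]
    abel
  have hevent : ∀ ε, _ := fun ε =>
    signPattern_iff_of_kkt hD hσ (hDZ ε) (hsub _) (hKKT _) (huniq _)
  refine ⟨fun ε => ⟨hevent ε, fun ⟨hsupp, hsign⟩ => ?_⟩,
    fun Ω _ Pr εr => congrArg Pr (Set.ext fun ω => hevent (εr ω))⟩
  have hpw := piecewise_eq_of_kkt_of_signPattern hD (hDZ ε) (hsub _) (hKKT _) hsupp hsign
  exact ⟨fun j hj => by rw [← hpw, A₀.piecewise_eq_of_mem _ _ hj],
    fun j hj => by rw [← hpw, A₀.piecewise_eq_of_notMem _ _ hj]⟩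

/-- The sign-recovery event `{supp(β̂) = A₀, sgn(β̂_{A₀}) = s₀}` coincides with
`{Z ∈ Ω_{A₀,s₀}}` for `Z = D(A₀)⁻¹ U + μ⁰`, on which `(β̂_{A₀}, S_{I₀}) = Z`;
consequently the two events have the same probability, for any `n ≥ 1` and `p ≥ 1`. -/
theorem sign_recovery_event_eq {n p : ℕ} (hn : 1 ≤ n) (hp : 1 ≤ p)
    (X : Matrix (Fin n) (Fin p) ℝ)
    (w : Fin p → ℝ) (hw : ∀ j, 0 < w j) (lam : ℝ) (hlam : 0 < lam)
    (β₀ : Fin p → ℝ) (A₀ : Finset (Fin p)) (hA₀ : ∀ j, j ∈ A₀ ↔ β₀ j ≠ 0)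
    (hPD : (((n : ℝ)⁻¹ • (Xᵀ * X)).submatrix
      (fun i : A₀ => (i : Fin p)) (fun j : A₀ => (j : Fin p))).PosDef)
    (hD : IsUnit (Dmat ((n : ℝ)⁻¹ • (Xᵀ * X)) w lam A₀).det)
    -- the Lasso estimator and its subgradient (columns of X in general position:
    -- the KKT system has a unique solution for every response)
    (bhat Shat : (Fin n → ℝ) → (Fin p → ℝ))
    (hmin : ∀ y b, lassoLoss X y w lam (bhat y) ≤ lassoLoss X y w lam b)
    (hsub : ∀ y, IsL1Subgradient (Shat y) (bhat y))
    (hKKT : ∀ y, (fun j => (n : ℝ)⁻¹ * Xᵀ.mulVec y j) =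
      ((n : ℝ)⁻¹ • (Xᵀ * X)).mulVec (bhat y) + fun j => lam * w j * Shat y j)
    (huniq : ∀ y (b s : Fin p → ℝ), IsL1Subgradient s b →
      ((fun j => (n : ℝ)⁻¹ * Xᵀ.mulVec y j) =
        ((n : ℝ)⁻¹ • (Xᵀ * X)).mulVec b + fun j => lam * w j * s j) →
      b = bhat y ∧ s = Shat y)
    -- Z = D(A₀)⁻¹ U + μ⁰
    (μ0 : Fin p → ℝ)
    (hμ0 : μ0 = (Dmat ((n : ℝ)⁻¹ • (Xᵀ * X)) w lam A₀)⁻¹.mulVec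
      (((n : ℝ)⁻¹ • (Xᵀ * X)).mulVec β₀ -
        fun j => if j ∈ A₀ then lam * w j * Real.sign (β₀ j) else 0))
    (Z : (Fin n → ℝ) → (Fin p → ℝ))
    (hZ : ∀ ε, Z ε = (Dmat ((n : ℝ)⁻¹ • (Xᵀ * X)) w lam A₀)⁻¹.mulVec
      (fun j => (n : ℝ)⁻¹ * Xᵀ.mulVec ε j) + μ0) :
    (∀ ε : Fin n → ℝ,
      (((∀ j, bhat (X.mulVec β₀ + ε) j ≠ 0 ↔ j ∈ A₀) ∧
        (∀ j ∈ A₀, Real.sign (bhat (X.mulVec β₀ + ε) j) = Real.sign (β₀ j))) ↔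
       ((∀ j ∈ A₀, Real.sign (Z ε j) = Real.sign (β₀ j)) ∧
        (∀ j ∉ A₀, |Z ε j| ≤ 1))) ∧
      (((∀ j, bhat (X.mulVec β₀ + ε) j ≠ 0 ↔ j ∈ A₀) ∧
        (∀ j ∈ A₀, Real.sign (bhat (X.mulVec β₀ + ε) j) = Real.sign (β₀ j))) →
       ((∀ j ∈ A₀, bhat (X.mulVec β₀ + ε) j = Z ε j) ∧
        (∀ j ∉ A₀, Shat (X.mulVec β₀ + ε) j = Z ε j)))) ∧
    (∀ (Ω : Type) (_m : MeasurableSpace Ω) (Pr : Measure Ω) (εr : Ω → Fin n → ℝ),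
      Pr {ω | (∀ j, bhat (X.mulVec β₀ + εr ω) j ≠ 0 ↔ j ∈ A₀) ∧
              (∀ j ∈ A₀, Real.sign (bhat (X.mulVec β₀ + εr ω) j) = Real.sign (β₀ j))} =
      Pr {ω | (∀ j ∈ A₀, Real.sign (Z (εr ω) j) = Real.sign (β₀ j)) ∧
              (∀ j ∉ A₀, |Z (εr ω) j| ≤ 1)}) :=
  sign_recovery_event_eq_general X w lam β₀ A₀ hA₀ hD bhat Shat hsub hKKT huniq μ0 hμ0 Z hZ
end
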